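/- The social welfare function on three alternatives {a,b,c} and two voters defined by: society always ranks a above b and a above c, and ranks b above c unless both voters rank c above b, satisfies IIA, has exactly two orders in its range (a≻b≻c and a≻c≻b) at Kendall tau distance 1, and is neither dictatorial nor inversely dictatorial. -/

import Mathlib

/-- A strict linear order on the 3-element set `Fin 3`, encoded as a boolean-valued
relation (`r a b = true` meaning `a` is ranked above `b`). -/
abbrev LO3 := {r : Fin 3 → Fin 3 → Bool // IsStrictTotalOrder (Fin 3) (fun a b => r a b = true)}

lemma LO3.mk_sto (r : Fin 3 → Fin 3 → Bool)
    (h₁ : ∀ a b, r a b = true ∨ a = b ∨ r b a = true)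
    (h₂ : ∀ a, ¬ r a a = true)
    (h₃ : ∀ a b c, r a b = true → r b c = true → r a c = true) :
    IsStrictTotalOrder (Fin 3) (fun a b => r a b = true) := by
  haveI : IsTrichotomous (Fin 3) (fun a b => r a b = true) :=
    ⟨fun a b hab hba => ((h₁ a b).resolve_left hab).resolve_right hba⟩
  haveI : IsIrrefl (Fin 3) (fun a b => r a b = true) := ⟨h₂⟩
  haveI : IsTrans (Fin 3) (fun a b => r a b = true) := ⟨h₃⟩
  haveI : IsStrictOrder (Fin 3) (fun a b => r a b = true) := ⟨⟩
  exact ⟨⟩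

/-- The reverse (inverse) of a strict linear order. -/
def LO3.rev (r : LO3) : LO3 :=
  ⟨fun a b => r.val b a, by
    haveI := r.prop
    exact @IsStrictTotalOrder.swap (Fin 3) (fun a b => r.val a b = true) _⟩

/-- Kendall tau distance: the number of (unordered) pairs on which two orders disagree. -/
def kendall (r s : LO3) : ℕ :=
  (Finset.univ.filter
    (fun p : Fin 3 × Fin 3 => p.1 < p.2 ∧ r.val p.1 p.2 ≠ s.val p.1 p.2)).card

/-- Independence of irrelevant alternatives for a two-voter SWF on `Fin 3`. -/
def IIA2 (W : (Fin 2 → LO3) → LO3) : Prop :=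
  ∀ π π' : Fin 2 → LO3, ∀ a b : Fin 3,
    (∀ v, (π v).val a b = (π' v).val a b) → (W π).val a b = (W π').val a b

/-- Unanimity for a two-voter SWF on `Fin 3`. -/
def Unanimity2 (W : (Fin 2 → LO3) → LO3) : Prop :=
  ∀ π : Fin 2 → LO3, ∀ a b : Fin 3, (∀ v, (π v).val a b = true) → (W π).val a b = true

def Dictatorial (W : (Fin 2 → LO3) → LO3) : Prop := ∃ d, ∀ π, W π = π d

def InverselyDictatorial (W : (Fin 2 → LO3) → LO3) : Prop := ∃ d, ∀ π, W π = (π d).rev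

/-- The order a ≻ b ≻ c on {a,b,c} = {0,1,2}. -/
def ord012 : LO3 :=
  ⟨fun a b => decide (a < b), LO3.mk_sto _ (by decide) (by decide) (by decide)⟩

/-- The order a ≻ c ≻ b on {a,b,c} = {0,1,2}. -/
def ord021 : LO3 :=
  ⟨fun a b => decide ((a = 0 ∧ b ≠ 0) ∨ (a = 2 ∧ b = 1)),
    LO3.mk_sto _ (by decide) (by decide) (by decide)⟩

/-- The SWF that always ranks a above b and a above c, and ranks b above c
unless both voters rank c above b. -/
def W17 (π : Fin 2 → LO3) : LO3 :=
  if (π 0).val 2 1 = true ∧ (π 1).val 2 1 = true then ord021 else ord012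

/-! The society's ranking is `ord012` or `ord021`, which differ only on the pair `{1, 2}` and
are chosen according to the voters' comparisons of `2` and `1` alone; this gives IIA. Both
orders rank `0` above `1`, while a dictator's order, or the reverse of an inverse dictator's,
need not. -/

lemma LO3.val_swap (r : LO3) {a b : Fin 3} (hab : a ≠ b) : r.val b a = !r.val a b := by
  have := r.prop
  have htri := trichotomous_of (fun x y => r.val x y = true) a b
  have hasymm : ¬ (r.val a b = true ∧ r.val b a = true) := fun ⟨h, h'⟩ =>
    irrefl_of (fun x y => r.val x y = true) a (trans_of (fun x y => r.val x y = true) h h')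
  cases hv : r.val a b <;> cases hw : r.val b a <;> simp_all

lemma LO3.val_eq_iff_val_swap_eq (r s : LO3) {a b : Fin 3} (hab : a ≠ b) :
    r.val b a = s.val b a ↔ r.val a b = s.val a b := by
  rw [r.val_swap hab, s.val_swap hab, Bool.not_inj_iff]

lemma ord021_val_eq_ord012_val {a b : Fin 3} (h : ¬ ((a = 1 ∧ b = 2) ∨ (a = 2 ∧ b = 1))) :
    ord021.val a b = ord012.val a b := by
  revert a b; decide

lemma W17_eq_or (π : Fin 2 → LO3) : W17 π = ord012 ∨ W17 π = ord021 := by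
  unfold W17
  split_ifs
  · exact Or.inr rfl
  · exact Or.inl rfl

lemma W17_congr {π π' : Fin 2 → LO3} (h : ∀ v, (π v).val 2 1 = (π' v).val 2 1) :
    W17 π = W17 π' := by
  simp only [W17, h]

lemma W17_val_of_not_mem_pair (π : Fin 2 → LO3) {a b : Fin 3}
    (h : ¬ ((a = 1 ∧ b = 2) ∨ (a = 2 ∧ b = 1))) : (W17 π).val a b = ord012.val a b := by
  rcases W17_eq_or π with hπ | hπ <;> rw [hπ]
  exact ord021_val_eq_ord012_val h

lemma W17_IIA : IIA2 W17 := by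
  intro π π' a b h
  by_cases hpair : (a = 1 ∧ b = 2) ∨ (a = 2 ∧ b = 1)
  · suffices W17 π = W17 π' by rw [this]
    apply W17_congr
    rcases hpair with ⟨rfl, rfl⟩ | ⟨rfl, rfl⟩
    · exact fun v => ((π v).val_eq_iff_val_swap_eq (π' v) (by decide)).2 (h v)
    · exact h
  · rw [W17_val_of_not_mem_pair π hpair, W17_val_of_not_mem_pair π' hpair]

lemma W17_val_zero_one (π : Fin 2 → LO3) : (W17 π).val 0 1 = true :=
  W17_val_of_not_mem_pair π (by decide)

lemma W17_not_dictatorial : ¬ Dictatorial W17 := by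
  rintro ⟨d, hd⟩
  have h := W17_val_zero_one (fun _ => ord012.rev)
  rw [hd] at h
  exact absurd h (by decide)

lemma W17_not_inversely_dictatorial : ¬ InverselyDictatorial W17 := by
  rintro ⟨d, hd⟩
  have h := W17_val_zero_one (fun _ => ord012)
  rw [hd] at h
  exact absurd h (by decide)

/-- The SWF `W17` satisfies IIA, has exactly the two orders a≻b≻c and a≻c≻b in its
range, these are at Kendall tau distance 1, and `W17` is neither dictatorial nor
inversely dictatorial. -/
theorem W17_properties :
    IIA2 W17 ∧
    (∀ π, W17 π = ord012 ∨ W17 π = ord021) ∧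
    (∃ π, W17 π = ord012) ∧ (∃ π, W17 π = ord021) ∧
    kendall ord012 ord021 = 1 ∧
    ¬ Dictatorial W17 ∧ ¬ InverselyDictatorial W17 :=
  ⟨W17_IIA, W17_eq_or, ⟨fun _ => ord012, by decide⟩, ⟨fun _ => ord021, by decide⟩,
    by decide, W17_not_dictatorial, W17_not_inversely_dictatorial⟩
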